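/- Let S ∈ ℝ^{p×p} be symmetric positive semidefinite with spectral decomposition S = V·diag(λ₁,…,λ_p)·Vᵀ, V orthogonal, λ_i ≥ 0, and let n ≥ 1 and ρ_c > 0. Then Δ̂ = V·diag(θ₁,…,θ_p)·Vᵀ with θ_i = (λ_i + √(λ_i² + 16nρ_c))/(2n) is the unique maximizer over symmetric positive definite Δ ∈ ℝ^{p×p} of Q(Δ) = (n/2)·log det(Δ⁻¹) − (1/2)·tr(S·Δ⁻¹) − ρ_c·tr(Δ⁻¹·Δ⁻¹); equivalently, Δ̂ is the unique positive definite solution of the stationarity equation Δ − S/n − (4ρ_c/n)·Δ⁻¹ = 0. (Applied with S = XᵀΣ⁻¹X this is the conditional maximization step of the transposable model for fixed Σ; applied with the adjusted matrix X̂ᵀΣ⁻¹X̂ + G(Σ⁻¹) it is the CM step of the MCECM imputation algorithm.) -/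

import Mathlib

/-!
Pass to the precision matrix `Ω = Δ⁻¹`. Concavity of `log det` gives the tangent inequality
`log det Ω ≤ log det Ω₀ + tr (Ω₀⁻¹ (Ω - Ω₀))`, while `-ρ tr (Ω²)` falls short of its
linearization at `Ω₀` by exactly `ρ ‖Ω - Ω₀‖²_F`. Consequently, if `Δ₀ = Ω₀⁻¹` is positive definite
and solves `n Δ₀ - S - 4ρ Δ₀⁻¹ = 0` (twice the gradient in `Ω`), then
`Q Δ + ρ ‖Δ⁻¹ - Δ₀⁻¹‖²_F ≤ Q Δ₀` for every positive definite `Δ`. This makes `Δ₀` the unique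
maximizer and the unique positive definite stationary point. Finally `Δ̂ = V diag(θ) Vᵀ` is
stationary because it is diagonal in the eigenbasis of `S`, where the equation reduces to the
scalar quadratics `n θ² - λ θ - 4ρ = 0`, of which `θᵢ` is the positive root.
-/

open Matrix

namespace Matrix

section Trace

variable {ι : Type*} [Fintype ι] {D : Matrix ι ι ℝ}

lemma IsHermitian.trace_mul_self_nonneg (hD : D.IsHermitian) : 0 ≤ (D * D).trace := by
  simpa only [hD.eq] using (posSemidef_conjTranspose_mul_self D).trace_nonneg

lemma IsHermitian.trace_mul_self_eq_zero_iff (hD : D.IsHermitian) :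
    (D * D).trace = 0 ↔ D = 0 := by
  simpa only [hD.eq] using trace_conjTranspose_mul_self_eq_zero_iff (A := D)

end Trace

variable {ι : Type*} [Fintype ι] [DecidableEq ι]

lemma PosDef.log_det_le_trace_sub_card {C : Matrix ι ι ℝ} (hC : C.PosDef) :
    Real.log C.det ≤ C.trace - Fintype.card ι := by
  have hpos := hC.eigenvalues_pos
  rw [hC.isHermitian.det_eq_prod_eigenvalues, hC.isHermitian.trace_eq_sum_eigenvalues]
  simp only [RCLike.ofReal_real_eq_id, id]
  rw [Real.log_prod fun i _ => (hpos i).ne']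
  calc ∑ i, Real.log (hC.isHermitian.eigenvalues i)
      ≤ ∑ i, (hC.isHermitian.eigenvalues i - 1) :=
        Finset.sum_le_sum fun i _ => Real.log_le_sub_one_of_pos (hpos i)
    _ = _ := by simp [Finset.sum_sub_distrib]

open scoped MatrixOrder Matrix.Norms.L2Operator in
/-- Writing `A⁻¹ = Rᴴ R`, this is `log_det_le_trace_sub_card` for `R B Rᴴ`. -/
lemma PosDef.log_det_le_log_det_add_trace_inv_mul {A B : Matrix ι ι ℝ} (hA : A.PosDef)
    (hB : B.PosDef) :
    Real.log B.det ≤ Real.log A.det + ((A⁻¹ * B).trace - Fintype.card ι) := by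
  obtain ⟨R, hR, hRR⟩ :=
    CStarAlgebra.isStrictlyPositive_iff_eq_star_mul_self.mp hA.inv.isStrictlyPositive
  have hC : (R * B * star R).PosDef := (Matrix.IsUnit.posDef_star_right_conjugate_iff hR).mpr hB
  have hdet : (R * B * star R).det = (A⁻¹).det * B.det := by
    rw [hRR, det_mul, det_mul, det_mul]; ring
  have htr : (R * B * star R).trace = (A⁻¹ * B).trace := by
    rw [hRR, trace_mul_cycle, mul_assoc]
  have := hC.log_det_le_trace_sub_card
  rw [hdet, htr, Real.log_mul hA.inv.det_pos.ne' hB.det_pos.ne', det_nonsing_inv,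
    Ring.inverse_eq_inv, Real.log_inv] at this
  linarith

section Orthogonal

variable {V : Matrix ι ι ℝ}

lemma posDef_mul_diagonal_mul_transpose (hV : V * Vᵀ = 1) {d : ι → ℝ} (hd : ∀ i, 0 < d i) :
    (V * diagonal d * Vᵀ).PosDef := by
  have hVunit : IsUnit V := (isUnit_iff_isUnit_det V).mpr (isUnit_det_of_right_inverse hV)
  simpa [star_eq_conjTranspose, conjTranspose_eq_transpose_of_trivial] using
    (Matrix.IsUnit.posDef_star_right_conjugate_iff hVunit).mpr (posDef_diagonal_iff.mpr hd)

lemma inv_mul_diagonal_mul_transpose (hV : V * Vᵀ = 1) {d : ι → ℝ} (hd : ∀ i, d i ≠ 0) :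
    (V * diagonal d * Vᵀ)⁻¹ = V * diagonal d⁻¹ * Vᵀ := by
  refine inv_eq_right_inv ?_
  have hd' : diagonal d * diagonal d⁻¹ = 1 := by
    rw [diagonal_mul_diagonal, ← diagonal_one]
    exact congrArg diagonal (funext fun i => mul_inv_cancel₀ (hd i))
  calc V * diagonal d * Vᵀ * (V * diagonal d⁻¹ * Vᵀ)
      = V * (diagonal d * (Vᵀ * V) * diagonal d⁻¹) * Vᵀ := by simp only [Matrix.mul_assoc]
    _ = 1 := by rw [mul_eq_one_comm.mp hV, Matrix.mul_one, hd', Matrix.mul_one, hV]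

lemma smul_sub_sub_smul_inv_eq_zero_of_diagonal (hV : V * Vᵀ = 1) {a c : ℝ} {d l : ι → ℝ}
    (hd : ∀ i, d i ≠ 0) (hstat : a • d - l - c • d⁻¹ = 0) :
    a • (V * diagonal d * Vᵀ) - V * diagonal l * Vᵀ - c • (V * diagonal d * Vᵀ)⁻¹ = 0 := by
  have hdiag : diagonal (a • d - l - c • d⁻¹) = a • diagonal d - diagonal l - c • diagonal d⁻¹ := by
    rw [← diagonal_smul, ← diagonal_smul, diagonal_sub, diagonal_sub]; rfl
  have hconj := congrArg (fun M => V * M * Vᵀ) hdiag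
  simp only [hstat, diagonal_zero', Matrix.mul_zero, Matrix.zero_mul, Matrix.mul_sub,
    Matrix.sub_mul, Matrix.mul_smul, Matrix.smul_mul] at hconj
  rw [inv_mul_diagonal_mul_transpose hV hd]
  exact hconj.symm

end Orthogonal

end Matrix

variable {ι : Type*} [Fintype ι] [DecidableEq ι]

noncomputable def penalizedLogLik (n ρ : ℝ) (S Δ : Matrix ι ι ℝ) : ℝ :=
  n / 2 * Real.log (Δ⁻¹).det - 1 / 2 * (S * Δ⁻¹).trace - ρ * (Δ⁻¹ * Δ⁻¹).trace

section Stationary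

variable {n ρ : ℝ} {S Δ₀ Δ Δ₁ : Matrix ι ι ℝ}

theorem penalizedLogLik_add_trace_sq_le (hn : 0 ≤ n) (hΔ₀ : Δ₀.PosDef)
    (hstat : n • Δ₀ - S - (4 * ρ) • Δ₀⁻¹ = 0) (hΔ : Δ.PosDef) :
    penalizedLogLik n ρ S Δ + ρ * ((Δ⁻¹ - Δ₀⁻¹) * (Δ⁻¹ - Δ₀⁻¹)).trace ≤
      penalizedLogLik n ρ S Δ₀ := by
  have hdet₀ : IsUnit Δ₀.det := hΔ₀.det_pos.ne'.isUnit
  set Ω₀ := Δ₀⁻¹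
  set D := Δ⁻¹ - Ω₀
  have hΩ : Δ⁻¹ = Ω₀ + D := (add_sub_cancel Ω₀ Δ⁻¹).symm
  have hlog : Real.log (Δ⁻¹).det ≤ Real.log Ω₀.det + (Δ₀ * D).trace := by
    have := hΔ₀.inv.log_det_le_log_det_add_trace_inv_mul hΔ.inv
    have htr : (Δ₀ * Δ⁻¹).trace = Fintype.card ι + (Δ₀ * D).trace := by
      rw [hΩ, mul_add, trace_add, mul_nonsing_inv Δ₀ hdet₀, trace_one]
    rwa [nonsing_inv_nonsing_inv Δ₀ hdet₀, htr, add_sub_cancel_left] at this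
  have hstatD : n * (Δ₀ * D).trace = (S * D).trace + 4 * ρ * (Ω₀ * D).trace := by
    have := congrArg (fun M => (M * D).trace) hstat
    simp only [sub_mul, smul_mul, trace_sub, trace_smul, smul_eq_mul, zero_mul, trace_zero] at this
    linarith
  have hsq : (Δ⁻¹ * Δ⁻¹).trace = (Ω₀ * Ω₀).trace + 2 * (Ω₀ * D).trace + (D * D).trace := by
    rw [hΩ, add_mul, mul_add, mul_add, trace_add, trace_add, trace_add, trace_mul_comm D Ω₀]
    ring
  have hS : (S * Δ⁻¹).trace = (S * Ω₀).trace + (S * D).trace := by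
    rw [hΩ, mul_add, trace_add]
  unfold penalizedLogLik
  rw [hsq, hS]
  linear_combination (n / 2) * hlog + hstatD / 2

theorem penalizedLogLik_le_of_stationary (hn : 0 ≤ n) (hρ : 0 ≤ ρ) (hΔ₀ : Δ₀.PosDef)
    (hstat : n • Δ₀ - S - (4 * ρ) • Δ₀⁻¹ = 0) (hΔ : Δ.PosDef) :
    penalizedLogLik n ρ S Δ ≤ penalizedLogLik n ρ S Δ₀ := by
  have hsq := (hΔ.inv.isHermitian.sub hΔ₀.inv.isHermitian).trace_mul_self_nonneg
  nlinarith [penalizedLogLik_add_trace_sq_le hn hΔ₀ hstat hΔ]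

theorem eq_of_penalizedLogLik_eq_of_stationary (hn : 0 ≤ n) (hρ : 0 < ρ) (hΔ₀ : Δ₀.PosDef)
    (hstat : n • Δ₀ - S - (4 * ρ) • Δ₀⁻¹ = 0) (hΔ : Δ.PosDef)
    (heq : penalizedLogLik n ρ S Δ = penalizedLogLik n ρ S Δ₀) : Δ = Δ₀ := by
  have hD := hΔ.inv.isHermitian.sub hΔ₀.inv.isHermitian
  have hsq : ((Δ⁻¹ - Δ₀⁻¹) * (Δ⁻¹ - Δ₀⁻¹)).trace = 0 := by
    have := penalizedLogLik_add_trace_sq_le hn hΔ₀ hstat hΔ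
    have := hD.trace_mul_self_nonneg
    nlinarith
  exact inv_inj (sub_eq_zero.mp (hD.trace_mul_self_eq_zero_iff.mp hsq)) hΔ.det_pos.ne'.isUnit

theorem eq_of_stationary (hn : 0 ≤ n) (hρ : 0 < ρ) (hΔ₀ : Δ₀.PosDef)
    (hstat₀ : n • Δ₀ - S - (4 * ρ) • Δ₀⁻¹ = 0) (hΔ₁ : Δ₁.PosDef)
    (hstat₁ : n • Δ₁ - S - (4 * ρ) • Δ₁⁻¹ = 0) : Δ₁ = Δ₀ :=
  eq_of_penalizedLogLik_eq_of_stationary hn hρ hΔ₀ hstat₀ hΔ₁ <| le_antisymm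
    (penalizedLogLik_le_of_stationary hn hρ.le hΔ₀ hstat₀ hΔ₁)
    (penalizedLogLik_le_of_stationary hn hρ.le hΔ₁ hstat₁ hΔ₀)

end Stationary

theorem sub_one_div_smul_sub_div_smul_eq_zero_iff {𝕜 E : Type*} [Field 𝕜] [AddCommGroup E]
    [Module 𝕜 E] {n c : 𝕜} (hn : n ≠ 0) {x y z : E} :
    x - (1 / n) • y - (c / n) • z = 0 ↔ n • x - y - c • z = 0 := by
  rw [← smul_eq_zero_iff_right hn, smul_sub, smul_sub, smul_smul, smul_smul,
    mul_one_div_cancel hn, mul_div_cancel₀ _ hn, one_smul]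

/-- The positive root of `a t² - b t - c` when `a, c > 0`. -/
noncomputable def posRoot (a b c : ℝ) : ℝ := (b + √(b ^ 2 + 4 * a * c)) / (2 * a)

section PosRoot

variable {a b c : ℝ}

lemma posRoot_pos (ha : 0 < a) (hc : 0 < c) : 0 < posRoot a b c := by
  have hsqrt : |b| < √(b ^ 2 + 4 * a * c) := by
    rw [← Real.sqrt_sq_eq_abs]
    exact Real.sqrt_lt_sqrt (sq_nonneg b) (by nlinarith)
  have := neg_abs_le b
  unfold posRoot
  apply div_pos <;> linarith

lemma mul_posRoot_sub_sub_mul_inv (ha : 0 < a) (hc : 0 < c) :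
    a * posRoot a b c - b - c * (posRoot a b c)⁻¹ = 0 := by
  have hroot : a * posRoot a b c ^ 2 - b * posRoot a b c - c = 0 := by
    have hs : √(b ^ 2 + 4 * a * c) ^ 2 = b ^ 2 + 4 * a * c := Real.sq_sqrt (by nlinarith)
    unfold posRoot
    generalize √(b ^ 2 + 4 * a * c) = s at hs ⊢
    field_simp
    linear_combination hs
  have hpos := (posRoot_pos (b := b) ha hc).ne'
  field_simp
  linear_combination hroot

end PosRoot

theorem trcm_cm_step_unique_maximizer_general
    (p n : ℕ) (hn : 1 ≤ n)
    (S : Matrix (Fin p) (Fin p) ℝ)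
    (ρc : ℝ) (hρc : 0 < ρc)
    (V : Matrix (Fin p) (Fin p) ℝ) (hV : V * Vᵀ = 1)
    (lam : Fin p → ℝ)
    (hspec : S = V * Matrix.diagonal lam * Vᵀ)
    (θ : Fin p → ℝ)
    (hθ : ∀ i, θ i = (lam i + Real.sqrt ((lam i) ^ 2 + 16 * n * ρc)) / (2 * n))
    (Δhat : Matrix (Fin p) (Fin p) ℝ)
    (hΔhat : Δhat = V * Matrix.diagonal θ * Vᵀ)
    (Q : Matrix (Fin p) (Fin p) ℝ → ℝ)
    (hQ : ∀ Δ : Matrix (Fin p) (Fin p) ℝ,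
      Q Δ = (n / 2 : ℝ) * Real.log (Δ⁻¹).det
        - (1 / 2 : ℝ) * Matrix.trace (S * Δ⁻¹)
        - ρc * Matrix.trace (Δ⁻¹ * Δ⁻¹)) :
    Δhat.PosDef ∧ Δhatᵀ = Δhat ∧
      (∀ Δ : Matrix (Fin p) (Fin p) ℝ, Δ.PosDef → Δᵀ = Δ →
        Q Δ ≤ Q Δhat ∧ (Q Δ = Q Δhat → Δ = Δhat)) ∧
      (∀ Δ : Matrix (Fin p) (Fin p) ℝ, Δ.PosDef → Δᵀ = Δ →
        (Δ - (1 / (n : ℝ)) • S - (4 * ρc / (n : ℝ)) • Δ⁻¹ = 0 ↔ Δ = Δhat)) := by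
  have hn₀ : (0 : ℝ) < n := by exact_mod_cast hn
  have hθ_root : θ = fun i => posRoot n (lam i) (4 * ρc) :=
    funext fun i => by rw [hθ i, posRoot]; ring_nf
  have hθ_pos : ∀ i, 0 < θ i := fun i => hθ_root ▸ posRoot_pos hn₀ (by positivity)
  have hΔhat_pd : Δhat.PosDef := hΔhat ▸ posDef_mul_diagonal_mul_transpose hV hθ_pos
  have hstat : (n : ℝ) • Δhat - S - (4 * ρc) • Δhat⁻¹ = 0 := by
    rw [hΔhat, hspec]
    refine smul_sub_sub_smul_inv_eq_zero_of_diagonal hV (fun i => (hθ_pos i).ne') ?_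
    rw [hθ_root]; ext i; exact mul_posRoot_sub_sub_mul_inv hn₀ (by positivity)
  obtain rfl : Q = penalizedLogLik n ρc S := funext hQ
  refine ⟨hΔhat_pd, (isHermitian_iff_isSymm.mp hΔhat_pd.isHermitian).eq, fun Δ hΔ _ =>
    ⟨penalizedLogLik_le_of_stationary hn₀.le hρc.le hΔhat_pd hstat hΔ,
      eq_of_penalizedLogLik_eq_of_stationary hn₀.le hρc hΔhat_pd hstat hΔ⟩,
    fun Δ hΔ _ => ?_⟩
  rw [sub_one_div_smul_sub_div_smul_eq_zero_iff hn₀.ne']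
  exact ⟨fun h => eq_of_stationary hn₀.le hρc hΔhat_pd hstat hΔ h, fun h => h ▸ hstat⟩

/-- For `S` symmetric positive semidefinite with spectral decomposition
`S = V diag(λ) Vᵀ`, `n ≥ 1` and `ρ_c > 0`, the matrix `Δ̂ = V diag(θ) Vᵀ` with
`θᵢ = (λᵢ + √(λᵢ² + 16 n ρ_c))/(2n)` is the unique maximizer over symmetric positive
definite `Δ` of `Q(Δ) = (n/2)·log det(Δ⁻¹) − (1/2)·tr(SΔ⁻¹) − ρ_c·tr(Δ⁻¹Δ⁻¹)`;
equivalently, `Δ̂` is the unique positive definite solution of the stationarity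
equation `Δ − S/n − (4ρ_c/n)·Δ⁻¹ = 0`. -/
theorem trcm_cm_step_unique_maximizer
    (p n : ℕ) (hn : 1 ≤ n)
    (S : Matrix (Fin p) (Fin p) ℝ) (hS : S.PosSemidef)
    (ρc : ℝ) (hρc : 0 < ρc)
    (V : Matrix (Fin p) (Fin p) ℝ) (hV : V * Vᵀ = 1)
    (lam : Fin p → ℝ) (hlam_nonneg : ∀ i, 0 ≤ lam i)
    (hspec : S = V * Matrix.diagonal lam * Vᵀ)
    (θ : Fin p → ℝ)
    (hθ : ∀ i, θ i = (lam i + Real.sqrt ((lam i) ^ 2 + 16 * n * ρc)) / (2 * n))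
    (Δhat : Matrix (Fin p) (Fin p) ℝ)
    (hΔhat : Δhat = V * Matrix.diagonal θ * Vᵀ)
    (Q : Matrix (Fin p) (Fin p) ℝ → ℝ)
    (hQ : ∀ Δ : Matrix (Fin p) (Fin p) ℝ,
      Q Δ = (n / 2 : ℝ) * Real.log (Δ⁻¹).det
        - (1 / 2 : ℝ) * Matrix.trace (S * Δ⁻¹)
        - ρc * Matrix.trace (Δ⁻¹ * Δ⁻¹)) :
    Δhat.PosDef ∧ Δhatᵀ = Δhat ∧
      (∀ Δ : Matrix (Fin p) (Fin p) ℝ, Δ.PosDef → Δᵀ = Δ →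
        Q Δ ≤ Q Δhat ∧ (Q Δ = Q Δhat → Δ = Δhat)) ∧
      (∀ Δ : Matrix (Fin p) (Fin p) ℝ, Δ.PosDef → Δᵀ = Δ →
        (Δ - (1 / (n : ℝ)) • S - (4 * ρc / (n : ℝ)) • Δ⁻¹ = 0 ↔ Δ = Δhat)) :=
  trcm_cm_step_unique_maximizer_general p n hn S ρc hρc V hV lam hspec θ hθ Δhat hΔhat Q hQ
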